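/- In the two-parameter hierarchical algorithm, the total number of degrees of freedom required to solve the second family of cell problems at all points in $\bfa{\mathcal{S}}_2^1, \dots, \bfa{\mathcal{S}}_2^L$ is $O(L\, 2^{2(L+1)})$: if level $l$ contains $O(2^{2l})$ macro-points, each solved in a 2D finite element space of dimension $O(2^{2(L+1-l)})$, then $\sum_{l=1}^L O(2^{2l}) \cdot O(2^{2(L+1-l)}) = O(L\, 4^{L+1})$, whereas the full solve at all $O(4^L)$ points with the finest space of dimension $O(4^L)$ costs $O(16^L)$ degrees of freedom. -/
import Mathlib


/-- Theorem B.3: DOF count for the two-parameter hierarchical solve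
of the second family of cell problems.  If at every level `l ∈ {1,…,L}` the 2D
hierarchy has at most `c₁·2^{2l}` macro-points, each solved in a 2D FE space of
dimension at most `c₂·2^{2(L+1-l)}`, then the total number of degrees of freedom is at
most `c₁ c₂ · L · 2^{2(L+1)} = O(L·4^{L+1})`; whereas the full solve at `c₁·4^L`
points with the finest space of dimension `c₂·4^L` costs `c₁ c₂ · 16^L` degrees of
freedom. -/
theorem stmt11 (points dim : ℕ → ℕ → ℕ) (c₁ c₂ : ℕ)
    (hp : ∀ L l : ℕ, 1 ≤ l → l ≤ L → points L l ≤ c₁ * 2 ^ (2 * l))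
    (hd : ∀ L l : ℕ, 1 ≤ l → l ≤ L → dim L l ≤ c₂ * 2 ^ (2 * (L + 1 - l))) :
    (∀ L : ℕ,
      ∑ l ∈ Finset.Icc 1 L, points L l * dim L l ≤ c₁ * c₂ * L * 2 ^ (2 * (L + 1))) ∧
    (∀ L : ℕ, (c₁ * 2 ^ (2 * L)) * (c₂ * 2 ^ (2 * L)) = c₁ * c₂ * 16 ^ L) := by
  constructor
  · intro L
    have h : ∀ l ∈ Finset.Icc 1 L, points L l * dim L l ≤ c₁ * c₂ * 2 ^ (2 * (L + 1)) := by
      intro l hl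
      rw [Finset.mem_Icc] at hl
      calc points L l * dim L l
          ≤ (c₁ * 2 ^ (2 * l)) * (c₂ * 2 ^ (2 * (L + 1 - l))) :=
            Nat.mul_le_mul (hp L l hl.1 hl.2) (hd L l hl.1 hl.2)
        _ = c₁ * c₂ * 2 ^ (2 * l + 2 * (L + 1 - l)) := by rw [pow_add]; ring
        _ = c₁ * c₂ * 2 ^ (2 * (L + 1)) := by
            congr 2
            omega
    calc ∑ l ∈ Finset.Icc 1 L, points L l * dim L l
        ≤ ∑ l ∈ Finset.Icc 1 L, c₁ * c₂ * 2 ^ (2 * (L + 1)) := Finset.sum_le_sum h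
      _ = L * (c₁ * c₂ * 2 ^ (2 * (L + 1))) := by
          rw [Finset.sum_const, Nat.card_Icc]; simp [Nat.add_sub_cancel]
      _ = c₁ * c₂ * L * 2 ^ (2 * (L + 1)) := by ring
  · intro L
    have : (16 : ℕ) ^ L = 2 ^ (2 * L) * 2 ^ (2 * L) := by
      rw [← pow_add]
      rw [show 2*L+2*L = 4*L by ring, pow_mul]
      norm_num
    rw [this]; ring
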